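/- arXiv:2409.05204 — 6 statements merged into one kernel-verified Lean document; each statement's English description precedes it below -/
import Mathlib

section
/- Let Ω ⊆ ℝ^N be open, φ : Ω → ℝ everywhere differentiable with |∇φ| = 1 in Ω, x₀ ∈ Ω and R > 0 with B̄(x₀, R) ⊆ Ω. Then for every r ∈ [0, R], the maximum of φ over the closed ball B̄(x₀, r) equals φ(x₀) + r. -/
open Metric Set Filter Topology InnerProductSpace
open scoped NNReal

/-! By the mean value inequality `|∇φ| = 1` makes `φ` 1-Lipschitz on the convex ball
`B̄(x₀, R)`, so `M r := ballSup φ x₀ r ≤ φ x₀ + r`, and `M` is itself 1-Lipschitz in `r`.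
Conversely, if `x` maximises `φ` on `B̄(x₀, r)`, then `x + h ∇φ(x) ∈ B̄(x₀, r + h)` and
`φ (x + h ∇φ(x)) = φ x + h |∇φ(x)|² + o(h)`, so the lower right Dini derivative of `M` is at
least `1`; the fencing theorem for such functions gives `M r ≥ M 0 + r = φ x₀ + r`. -/

noncomputable def ballSup {X : Type*} [PseudoMetricSpace X] (f : X → ℝ) (x₀ : X) (r : ℝ) : ℝ :=
  sSup (f '' closedBall x₀ r)

section Metric

variable {X : Type*} [MetricSpace X] {f : X → ℝ} {x₀ : X} {K : ℝ≥0} {R r s : ℝ}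

@[simp]
lemma ballSup_zero : ballSup f x₀ 0 = f x₀ := by
  simp [ballSup]

lemma isGreatest_ballSup [ProperSpace X] (hf : ContinuousOn f (closedBall x₀ r)) (hr : 0 ≤ r) :
    IsGreatest (f '' closedBall x₀ r) (ballSup f x₀ r) :=
  ((isCompact_closedBall x₀ r).image_of_continuousOn hf).isGreatest_sSup
    ⟨f x₀, mem_image_of_mem f (mem_closedBall_self hr)⟩

lemma LipschitzOnWith.le_add_mul_of_mem_closedBall (hf : LipschitzOnWith K f (closedBall x₀ R))
    (hr : r ≤ R) {y : X} (hy : y ∈ closedBall x₀ r) : f y ≤ f x₀ + K * r := by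
  have hyR : y ∈ closedBall x₀ R := closedBall_subset_closedBall hr hy
  calc f y ≤ f x₀ + K * dist y x₀ :=
        hf.le_add_mul hyR (mem_closedBall_self (dist_nonneg.trans hyR))
    _ ≤ f x₀ + K * r := by gcongr; exact hy

lemma LipschitzOnWith.bddAbove_image_closedBall (hf : LipschitzOnWith K f (closedBall x₀ R))
    (hr : r ≤ R) : BddAbove (f '' closedBall x₀ r) :=
  ⟨f x₀ + K * r, by rintro _ ⟨y, hy, rfl⟩; exact hf.le_add_mul_of_mem_closedBall hr hy⟩

lemma LipschitzOnWith.ballSup_le_ballSup (hf : LipschitzOnWith K f (closedBall x₀ R))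
    (hr : 0 ≤ r) (hrs : r ≤ s) (hs : s ≤ R) : ballSup f x₀ r ≤ ballSup f x₀ s :=
  csSup_le_csSup (hf.bddAbove_image_closedBall hs)
    ⟨f x₀, mem_image_of_mem f (mem_closedBall_self hr)⟩
    (image_mono (closedBall_subset_closedBall hrs))

end Metric

section Normed

variable {E : Type*} [NormedAddCommGroup E] [NormedSpace ℝ E] {f : E → ℝ} {x₀ : E}
  {K : ℝ≥0} {R r s : ℝ}

lemma LipschitzOnWith.ballSup_le_ballSup_add (hf : LipschitzOnWith K f (closedBall x₀ R))
    (hr : 0 ≤ r) (hrs : r ≤ s) (hs : s ≤ R) :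
    ballSup f x₀ s ≤ ballSup f x₀ r + K * (s - r) := by
  refine csSup_le ⟨f x₀, mem_image_of_mem f (mem_closedBall_self (hr.trans hrs))⟩ ?_
  rintro _ ⟨y, hy, rfl⟩
  obtain ⟨y', hyy', hy'⟩ :=
    exists_dist_le_le (sub_nonneg.2 hrs) hr (by rw [add_sub_cancel]; exact hy)
  have hyR : y ∈ closedBall x₀ R := closedBall_subset_closedBall hs hy
  have hy'R : y' ∈ closedBall x₀ R := closedBall_subset_closedBall (hrs.trans hs) hy'
  calc f y ≤ f y' + K * dist y y' := hf.le_add_mul hyR hy'R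
    _ ≤ ballSup f x₀ r + K * (s - r) := by
        gcongr
        exact le_csSup (hf.bddAbove_image_closedBall (hrs.trans hs)) (mem_image_of_mem f hy')

lemma LipschitzOnWith.lipschitzOnWith_ballSup (hf : LipschitzOnWith K f (closedBall x₀ R)) :
    LipschitzOnWith K (ballSup f x₀) (Icc 0 R) := by
  refine LipschitzOnWith.of_le_add_mul K fun s hs r hr => ?_
  rcases le_total r s with hrs | hsr
  · rw [Real.dist_eq, abs_of_nonneg (sub_nonneg.2 hrs)]
    exact hf.ballSup_le_ballSup_add hr.1 hrs hs.2
  · have := hf.ballSup_le_ballSup hs.1 hsr hr.2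
    have : 0 ≤ (K : ℝ) * dist s r := by positivity
    linarith

end Normed

lemma image_add_mul_sub_le_of_frequently_lt_slope {M : ℝ → ℝ} {a b K : ℝ}
    (hM : ContinuousOn M (Icc a b))
    (hslope : ∀ x ∈ Ico a b, ∀ c < K, ∃ᶠ z in 𝓝[>] x, c < slope M x z) :
    ∀ ⦃x⦄, x ∈ Icc a b → M a + K * (x - a) ≤ M x := by
  intro x hx
  have hB : ∀ t, HasDerivAt (fun t => -(M a + K * (t - a))) (-K) t := fun t => by
    have := ((((hasDerivAt_id' t).sub_const a).const_mul K).const_add (M a)).neg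
    rwa [mul_one] at this
  have := image_le_of_liminf_slope_right_le_deriv_boundary (f := fun t => -M t) hM.neg
    (by simp) (fun t _ => (hB t).continuousAt.continuousWithinAt)
    (fun t _ => (hB t).hasDerivWithinAt)
    (fun t ht c hc => by simpa [slope_neg, neg_lt] using hslope t ht (-c) (neg_lt.1 hc)) hx
  linarith

section InnerProduct

variable {E : Type*} [NormedAddCommGroup E] [InnerProductSpace ℝ E] {f : E → ℝ}

lemma HasGradientAt.hasDerivAt_comp_add_smul [CompleteSpace E] {g x : E}
    (hf : HasGradientAt f g x) (v : E) (t₀ : ℝ) :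
    HasDerivAt (fun t => f (x + (t - t₀) • v)) ⟪g, v⟫_ℝ t₀ := by
  have hline : HasDerivAt (fun t : ℝ => x + (t - t₀) • v) v t₀ := by
    simpa using (((hasDerivAt_id t₀).sub_const t₀).smul_const v).const_add x
  have hf' : HasFDerivAt f (toDual ℝ E g) (x + (t₀ - t₀) • v) := by
    simpa using hf.hasFDerivAt
  simpa [Function.comp_def] using hf'.comp_hasDerivAt t₀ hline

lemma eventually_lt_slope_ballSup [CompleteSpace E] {x₀ x g v : E} {r c : ℝ}
    (hx : x ∈ closedBall x₀ r) (hmax : ballSup f x₀ r = f x) (hf : HasGradientAt f g x)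
    (hv : ‖v‖ ≤ 1) (hbdd : ∀ᶠ z in 𝓝[>] r, BddAbove (f '' closedBall x₀ z))
    (hc : c < ⟪g, v⟫_ℝ) :
    ∀ᶠ z in 𝓝[>] r, c < slope (ballSup f x₀) r z := by
  have hline := ((hf.hasDerivAt_comp_add_smul v r).tendsto_slope.mono_left
    (nhdsGT_le_nhdsNE r)).eventually (lt_mem_nhds hc)
  filter_upwards [hline, hbdd, self_mem_nhdsWithin] with z hcz hz hzr
  refine hcz.trans_le ?_
  have hrz : 0 < z - r := sub_pos.2 hzr
  have hstep : x + (z - r) • v ∈ closedBall x₀ z := by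
    rw [mem_closedBall]
    calc dist (x + (z - r) • v) x₀ ≤ dist (x + (z - r) • v) x + dist x x₀ := dist_triangle _ _ _
      _ ≤ (z - r) * 1 + r := by
          rw [dist_self_add_left, norm_smul, Real.norm_of_nonneg hrz.le]
          gcongr
          exact hx
      _ = z := by ring
  rw [slope_def_field, slope_def_field, hmax, sub_self, zero_smul, add_zero]
  gcongr
  exact le_csSup hz (mem_image_of_mem f hstep)

theorem ballSup_eq_add_of_norm_gradient_eq_one [ProperSpace E] {x₀ : E} {R : ℝ}
    (hdiff : ∀ x ∈ closedBall x₀ R, DifferentiableAt ℝ f x)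
    (hgrad : ∀ x ∈ closedBall x₀ R, ‖gradient f x‖ = 1) :
    ∀ r ∈ Icc 0 R, ballSup f x₀ r = f x₀ + r := by
  have hlip : LipschitzOnWith 1 f (closedBall x₀ R) :=
    (convex_closedBall x₀ R).lipschitzOnWith_of_nnnorm_fderiv_le hdiff fun x hx => by
      rw [← toDual_gradient, LinearIsometryEquiv.nnnorm_map, ← NNReal.coe_le_coe, coe_nnnorm,
        hgrad x hx, NNReal.coe_one]
  have hcont : ContinuousOn f (closedBall x₀ R) := hlip.continuousOn
  intro r hr
  refine le_antisymm ?_ ?_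
  · refine csSup_le ⟨f x₀, mem_image_of_mem f (mem_closedBall_self hr.1)⟩ ?_
    rintro _ ⟨y, hy, rfl⟩
    simpa using hlip.le_add_mul_of_mem_closedBall hr.2 hy
  · have hslope : ∀ s ∈ Ico 0 R, ∀ c < 1, ∃ᶠ z in 𝓝[>] s, c < slope (ballSup f x₀) s z := by
      intro s hs c hc
      have hsR := closedBall_subset_closedBall (x := x₀) hs.2.le
      obtain ⟨x, hx, hfx⟩ := (isGreatest_ballSup (hcont.mono hsR) hs.1).1
      have hbdd : ∀ᶠ z in 𝓝[>] s, BddAbove (f '' closedBall x₀ z) := by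
        filter_upwards [Ioo_mem_nhdsGT hs.2] with z hz
        exact hlip.bddAbove_image_closedBall hz.2.le
      refine (eventually_lt_slope_ballSup hx hfx.symm (hdiff x (hsR hx)).hasGradientAt
        (hgrad x (hsR hx)).le hbdd ?_).frequently
      rwa [real_inner_self_eq_norm_sq, hgrad x (hsR hx), one_pow]
    simpa using image_add_mul_sub_le_of_frequently_lt_slope
      (hlip.lipschitzOnWith_ballSup.continuousOn) hslope hr

end InnerProduct

theorem eikonal_max_eq_general {N : ℕ} {Ω : Set (EuclideanSpace ℝ (Fin N))}
    (φ : EuclideanSpace ℝ (Fin N) → ℝ)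
    (hdiff : ∀ x ∈ Ω, DifferentiableAt ℝ φ x)
    (heik : ∀ x ∈ Ω, ‖gradient φ x‖ = 1)
    (x₀ : EuclideanSpace ℝ (Fin N)) (R : ℝ)
    (hball : closedBall x₀ R ⊆ Ω) :
    ∀ r ∈ Icc (0:ℝ) R, IsGreatest (φ '' closedBall x₀ r) (φ x₀ + r) := by
  intro r hr
  have hcont : ContinuousOn φ (closedBall x₀ r) := fun x hx =>
    (hdiff x (hball (closedBall_subset_closedBall hr.2 hx))).continuousAt.continuousWithinAt
  rw [← ballSup_eq_add_of_norm_gradient_eq_one (fun x hx => hdiff x (hball hx))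
    (fun x hx => heik x (hball hx)) r hr]
  exact isGreatest_ballSup hcont hr.1

theorem eikonal_max_eq {N : ℕ} {Ω : Set (EuclideanSpace ℝ (Fin N))}
    (hΩ : IsOpen Ω) (φ : EuclideanSpace ℝ (Fin N) → ℝ)
    (hdiff : ∀ x ∈ Ω, DifferentiableAt ℝ φ x)
    (heik : ∀ x ∈ Ω, ‖gradient φ x‖ = 1)
    (x₀ : EuclideanSpace ℝ (Fin N)) (hx₀ : x₀ ∈ Ω) (R : ℝ) (hR : 0 < R)
    (hball : closedBall x₀ R ⊆ Ω) :
    ∀ r ∈ Icc (0:ℝ) R, IsGreatest (φ '' closedBall x₀ r) (φ x₀ + r) :=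
  eikonal_max_eq_general φ hdiff heik x₀ R hball
end

section
/- Let Ω ⊆ ℝ^N be open, φ : Ω → ℝ everywhere differentiable with |∇φ| = 1 in Ω, x₀ ∈ Ω and R > 0 with B̄(x₀, R) ⊆ Ω. Then for every r ∈ [0, R], the minimum of φ over B̄(x₀, r) equals φ(x₀) − r. -/
open Metric Set

/-!
By the mean value inequality `φ` is `1`-Lipschitz on `B̄(x₀, R)`, so `φ ≥ φ(x₀) - r` on
`B̄(x₀, r)`. Conversely, let `m(t)` be the minimum of `φ` over `B̄(x₀, t)`; it is Lipschitz in `t`.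
If `x` minimises `φ` on `B̄(x₀, s)`, then `x + h • v ∈ B̄(x₀, s + h)` whenever `‖v‖ ≤ 1`, and
`v` can be chosen with `φ'(x) v` as close to `-‖φ'(x)‖ = -1` as we like. So the lower right Dini
derivative of `m` is at most `-1`, and the comparison principle gives `m(t) ≤ φ(x₀) - t`.
-/

open Filter Topology Pointwise
open scoped NNReal

theorem ContinuousLinearMap.exists_norm_le_one_apply_lt {E : Type*} [NormedAddCommGroup E]
    [NormedSpace ℝ E] (f : E →L[ℝ] ℝ) {r : ℝ} (hr : -‖f‖ < r) :
    ∃ v : E, ‖v‖ ≤ 1 ∧ f v < r := by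
  obtain ⟨w, hw, hfw⟩ := f.exists_lt_apply_of_lt_opNorm (r := -r) (by linarith)
  rw [Real.norm_eq_abs] at hfw
  rcases le_total 0 (f w) with hpos | hneg
  · exact ⟨-w, by rw [norm_neg]; exact hw.le, by rw [map_neg]; linarith [abs_of_nonneg hpos]⟩
  · exact ⟨w, hw.le, by linarith [abs_of_nonpos hneg]⟩

noncomputable def ballInf {E : Type*} [PseudoMetricSpace E] (φ : E → ℝ) (x₀ : E) (t : ℝ) : ℝ :=
  sInf (φ '' closedBall x₀ t)

theorem ballInf_zero {E : Type*} [MetricSpace E] {φ : E → ℝ} {x₀ : E} :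
    ballInf φ x₀ 0 = φ x₀ := by
  simp [ballInf, closedBall_zero]

section ProperSpace

variable {E : Type*} [PseudoMetricSpace E] [ProperSpace E] {φ : E → ℝ} {x₀ : E} {R : ℝ}

theorem ballInf_le {t : ℝ} (hφ : ContinuousOn φ (closedBall x₀ t)) {y : E}
    (hy : y ∈ closedBall x₀ t) : ballInf φ x₀ t ≤ φ y :=
  csInf_le ((isCompact_closedBall x₀ t).bddBelow_image hφ) (mem_image_of_mem φ hy)

theorem exists_mem_closedBall_eq_ballInf {t : ℝ} (hφ : ContinuousOn φ (closedBall x₀ t))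
    (ht : 0 ≤ t) : ∃ x ∈ closedBall x₀ t, φ x = ballInf φ x₀ t :=
  ((isCompact_closedBall x₀ t).image_of_continuousOn hφ).sInf_mem
    ((nonempty_closedBall.2 ht).image φ)

theorem ballInf_antitoneOn (hφ : ContinuousOn φ (closedBall x₀ R)) :
    AntitoneOn (ballInf φ x₀) (Icc 0 R) := by
  intro s hs t ht hst
  obtain ⟨x, hx, hxs⟩ := exists_mem_closedBall_eq_ballInf
    (hφ.mono (closedBall_subset_closedBall hs.2)) hs.1
  rw [← hxs]
  exact ballInf_le (hφ.mono (closedBall_subset_closedBall ht.2))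
    (closedBall_subset_closedBall hst hx)

end ProperSpace

section NormedSpace

variable {E : Type*} [NormedAddCommGroup E] [NormedSpace ℝ E] [ProperSpace E]
  {φ : E → ℝ} {x₀ : E} {R : ℝ}

theorem ballInf_le_ballInf_add {K : ℝ≥0} (hφ : LipschitzOnWith K φ (closedBall x₀ R))
    {s t : ℝ} (hs : 0 ≤ s) (hst : s ≤ t) (ht : t ≤ R) :
    ballInf φ x₀ s ≤ ballInf φ x₀ t + K * (t - s) := by
  obtain ⟨x, hx, hxt⟩ := exists_mem_closedBall_eq_ballInf
    (hφ.continuousOn.mono (closedBall_subset_closedBall ht)) (hs.trans hst)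
  have hxR : x ∈ closedBall x₀ R := closedBall_subset_closedBall ht hx
  have hsplit : x ∈ closedBall x₀ s + closedBall (0 : E) (t - s) := by
    rwa [closedBall_add_closedBall hs (sub_nonneg.2 hst), add_zero, add_sub_cancel]
  obtain ⟨y, hy, w, hw, rfl⟩ := hsplit
  have hyR : y ∈ closedBall x₀ R := closedBall_subset_closedBall (hst.trans ht) hy
  calc ballInf φ x₀ s ≤ φ y := ballInf_le (hφ.continuousOn.mono (closedBall_subset_closedBall
        (hst.trans ht))) hy
    _ ≤ φ (y + w) + K * dist y (y + w) := hφ.le_add_mul hyR hxR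
    _ ≤ ballInf φ x₀ t + K * (t - s) := by
      rw [hxt, dist_self_add_right]
      gcongr
      simpa using hw

theorem lipschitzOnWith_ballInf {K : ℝ≥0} (hφ : LipschitzOnWith K φ (closedBall x₀ R)) :
    LipschitzOnWith K (ballInf φ x₀) (Icc 0 R) := by
  refine .of_le_add_mul K fun s hs t ht ↦ ?_
  rcases le_total s t with hst | hts
  · simpa [Real.dist_eq, abs_of_nonpos (sub_nonpos.2 hst)] using
      ballInf_le_ballInf_add hφ hs.1 hst ht.2
  · have := ballInf_antitoneOn hφ.continuousOn ht hs hts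
    have : 0 ≤ (K : ℝ) * dist s t := by positivity
    linarith

theorem frequently_slope_ballInf_lt (hφ : ContinuousOn φ (closedBall x₀ R)) {s : ℝ}
    (hs : s < R) {x : E} (hx : x ∈ closedBall x₀ s) (hxs : φ x = ballInf φ x₀ s)
    (hdiff : DifferentiableAt ℝ φ x) {r : ℝ} (hr : -‖fderiv ℝ φ x‖ < r) :
    ∃ᶠ z in 𝓝[>] s, slope (ballInf φ x₀) s z < r := by
  obtain ⟨v, hv, hvr⟩ := (fderiv ℝ φ x).exists_norm_le_one_apply_lt hr
  set g : ℝ → ℝ := fun z ↦ φ (x + (z - s) • v)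
  have hg : HasDerivAt g (fderiv ℝ φ x v) s := by
    refine hdiff.hasFDerivAt.comp_hasDerivAt_of_eq s ?_ (by simp)
    simpa using ((hasDerivAt_id s).sub_const s).smul_const v |>.const_add x
  have hg_slope : ∀ᶠ z in 𝓝[>] s, slope g s z < r :=
    (hasDerivAt_iff_tendsto_slope.1 hg).eventually (eventually_lt_nhds hvr)
      |>.filter_mono (nhdsWithin_mono s fun z hz ↦ ne_of_gt hz)
  refine (hg_slope.and (Ioo_mem_nhdsGT hs)).frequently.mono fun z ⟨hgz, hz⟩ ↦ ?_
  have hmem : x + (z - s) • v ∈ closedBall x₀ z := by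
    rw [mem_closedBall, dist_eq_norm, add_sub_right_comm]
    calc ‖x - x₀ + (z - s) • v‖ ≤ s + (z - s) * 1 := by
          refine (norm_add_le _ _).trans (add_le_add (mem_closedBall_iff_norm.1 hx) ?_)
          rw [norm_smul, Real.norm_of_nonneg (sub_nonneg.2 hz.1.le)]
          exact mul_le_mul_of_nonneg_left hv (sub_nonneg.2 hz.1.le)
      _ = z := by ring
  have hmz : ballInf φ x₀ z ≤ g z :=
    ballInf_le (hφ.mono (closedBall_subset_closedBall hz.2.le)) hmem
  calc slope (ballInf φ x₀) s z ≤ slope g s z := by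
        simp only [slope_def_field, g, sub_self, zero_smul, add_zero, hxs]
        gcongr
        linarith [hz.1]
    _ < r := hgz

theorem ballInf_le_sub {K : ℝ≥0} (hφ : LipschitzOnWith K φ (closedBall x₀ R))
    (hdiff : ∀ x ∈ closedBall x₀ R, DifferentiableAt ℝ φ x)
    (hgrad : ∀ x ∈ closedBall x₀ R, 1 ≤ ‖fderiv ℝ φ x‖) :
    ∀ t ∈ Icc 0 R, ballInf φ x₀ t ≤ φ x₀ - t := by
  refine image_le_of_liminf_slope_right_le_deriv_boundary
    (lipschitzOnWith_ballInf hφ).continuousOn (by simp [ballInf_zero]) (by fun_prop)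
    (B' := fun _ ↦ -1)
    (fun t _ ↦ ((hasDerivWithinAt_id t _).const_sub _).congr_deriv (by simp)) ?_
  intro s hs r hr
  obtain ⟨x, hx, hxs⟩ := exists_mem_closedBall_eq_ballInf
    (hφ.continuousOn.mono (closedBall_subset_closedBall hs.2.le)) hs.1
  have hxR : x ∈ closedBall x₀ R := closedBall_subset_closedBall hs.2.le hx
  exact frequently_slope_ballInf_lt hφ.continuousOn hs.2 hx hxs (hdiff x hxR)
    (by linarith [hgrad x hxR])

end NormedSpace

theorem eikonal_min_eq_general {N : ℕ} {Ω : Set (EuclideanSpace ℝ (Fin N))}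
    (φ : EuclideanSpace ℝ (Fin N) → ℝ)
    (hdiff : ∀ x ∈ Ω, DifferentiableAt ℝ φ x)
    (heik : ∀ x ∈ Ω, ‖gradient φ x‖ = 1)
    (x₀ : EuclideanSpace ℝ (Fin N)) (R : ℝ)
    (hball : closedBall x₀ R ⊆ Ω) :
    ∀ r ∈ Icc (0:ℝ) R, IsLeast (φ '' closedBall x₀ r) (φ x₀ - r) := by
  have hfderiv : ∀ x ∈ closedBall x₀ R, ‖fderiv ℝ φ x‖ = 1 := fun x hx ↦ by
    simpa [gradient] using heik x (hball hx)
  have hlip : LipschitzOnWith 1 φ (closedBall x₀ R) :=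
    (convex_closedBall x₀ R).lipschitzOnWith_of_nnnorm_fderiv_le (fun x hx ↦ hdiff x (hball hx))
      fun x hx ↦ by simp [← NNReal.coe_le_coe, hfderiv x hx]
  intro r hr
  have hsub : closedBall x₀ r ⊆ closedBall x₀ R := closedBall_subset_closedBall hr.2
  have hlower : ∀ y ∈ closedBall x₀ r, φ x₀ - r ≤ φ y := fun y hy ↦ by
    have := hlip.le_add_mul (hsub (mem_closedBall_self hr.1)) (hsub hy)
    rw [NNReal.coe_one, one_mul, dist_comm] at this
    linarith [mem_closedBall.1 hy]
  obtain ⟨x, hx, hxr⟩ := exists_mem_closedBall_eq_ballInf (hlip.continuousOn.mono hsub) hr.1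
  have hupper : φ x ≤ φ x₀ - r := hxr ▸ ballInf_le_sub hlip (fun x hx ↦ hdiff x (hball hx))
    (fun x hx ↦ (hfderiv x hx).ge) r hr
  exact ⟨⟨x, hx, le_antisymm hupper (hlower x hx)⟩, forall_mem_image.2 hlower⟩

theorem eikonal_min_eq {N : ℕ} {Ω : Set (EuclideanSpace ℝ (Fin N))}
    (hΩ : IsOpen Ω) (φ : EuclideanSpace ℝ (Fin N) → ℝ)
    (hdiff : ∀ x ∈ Ω, DifferentiableAt ℝ φ x)
    (heik : ∀ x ∈ Ω, ‖gradient φ x‖ = 1)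
    (x₀ : EuclideanSpace ℝ (Fin N)) (hx₀ : x₀ ∈ Ω) (R : ℝ) (hR : 0 < R)
    (hball : closedBall x₀ R ⊆ Ω) :
    ∀ r ∈ Icc (0:ℝ) R, IsLeast (φ '' closedBall x₀ r) (φ x₀ - r) :=
  eikonal_min_eq_general φ hdiff heik x₀ R hball
end

section
/- Let Ω ⊆ ℝ^N be open, φ : Ω → ℝ everywhere differentiable with |∇φ| = 1 in Ω, x₀ ∈ Ω and R > 0 with B̄(x₀, R) ⊆ Ω. If x⁺, x⁻ ∈ B̄(x₀, R) are points where φ attains its maximum and minimum on B̄(x₀, R) respectively, then |x⁺ − x⁻| = 2R; in particular x⁺ and x⁻ are antipodal points of the ball. -/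
open Metric Set Filter Topology

/-!
Let `m t` be the supremum of `φ` on `closedBall x₀ t`. If `y` realises `m t`, moving from `y` a
distance `h` in a direction where `Dφ(y)` is almost `‖Dφ(y)‖ = 1` stays inside
`closedBall x₀ (t + h)` and raises `φ` by almost `h`; hence the monotone function `m` has right
Dini derivatives `≥ 1` and `m R ≥ φ x₀ + R`. Likewise `min φ ≤ φ x₀ - R` on the ball, and since
`φ` is `1`-Lipschitz there, `‖x⁺ - x⁻‖ ≥ 2R`. In a strictly convex space two points of a closed
ball of radius `R` at distance `2R` are symmetric about its centre.
-/

theorem MonotoneOn.add_mul_le_of_frequently_lt_slope {f : ℝ → ℝ} {a b r : ℝ}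
    (hf : MonotoneOn f (Icc a b)) (hab : a ≤ b) (hr : 0 ≤ r)
    (hslope : ∀ x ∈ Ico a b, ∃ᶠ z in 𝓝[>] x, r < slope f x z) :
    f a + r * (b - a) ≤ f b := by
  set S := {x ∈ Icc a b | f a + r * (x - a) ≤ f x}
  have haS : a ∈ S := ⟨left_mem_Icc.2 hab, by simp⟩
  have hSbdd : BddAbove S := ⟨b, fun x hx => hx.1.2⟩
  set T := sSup S
  have hT : T ∈ Icc a b := ⟨le_csSup hSbdd haS, csSup_le ⟨a, haS⟩ fun x hx => hx.1.2⟩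
  -- no continuity of `f` is needed here: monotonicity alone puts `sSup S` in `S`
  have hTS : T ∈ S := by
    refine ⟨hT, ?_⟩
    have hline : Monotone fun x => f a + r * (x - a) := fun x y hxy => by
      simp only; gcongr
    rw [hline.map_csSup_of_continuousAt (by fun_prop) ⟨a, haS⟩ hSbdd]
    refine csSup_le (Set.Nonempty.image _ ⟨a, haS⟩) ?_
    rintro _ ⟨x, hx, rfl⟩
    exact hx.2.trans (hf hx.1 hT (le_csSup hSbdd hx))
  obtain hTb | hTb := hT.2.lt_or_eq
  · obtain ⟨z, hz, hzT, hzb⟩ := ((hslope T ⟨hT.1, hTb⟩).and_eventually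
      (Ioo_mem_nhdsGT hTb)).exists
    rw [slope_def_field, lt_div_iff₀ (sub_pos.2 hzT)] at hz
    have hzS : z ∈ S := ⟨⟨hT.1.trans hzT.le, hzb.le⟩, by linarith [hTS.2]⟩
    exact absurd (le_csSup hSbdd hzS) (not_le.2 hzT)
  · exact hTb ▸ hTS.2

theorem MonotoneOn.add_mul_le_of_forall_lt_frequently_lt_slope {f : ℝ → ℝ} {a b c : ℝ}
    (hf : MonotoneOn f (Icc a b)) (hab : a ≤ b)
    (hslope : ∀ x ∈ Ico a b, ∀ r < c, ∃ᶠ z in 𝓝[>] x, r < slope f x z) :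
    f a + c * (b - a) ≤ f b := by
  obtain hc | hc := le_or_gt c 0
  · nlinarith [hf (left_mem_Icc.2 hab) (right_mem_Icc.2 hab) hab]
  refine le_of_tendsto (f := fun r => f a + r * (b - a)) (x := 𝓝[<] c) ?_ ?_
  · exact ((continuous_const.add (continuous_id.mul continuous_const)).tendsto c).mono_left
      nhdsWithin_le_nhds
  · filter_upwards [Ioo_mem_nhdsLT hc] with r hr
    exact hf.add_mul_le_of_frequently_lt_slope hab hr.1.le fun x hx => hslope x hx r hr.2

section
variable {E : Type*} [NormedAddCommGroup E] [NormedSpace ℝ E]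

theorem ContinuousLinearMap.exists_norm_le_one_lt_apply (L : StrongDual ℝ E) {r : ℝ}
    (hr : r < ‖L‖) : ∃ v : E, ‖v‖ ≤ 1 ∧ r < L v := by
  obtain ⟨v, hv, hrv⟩ := L.exists_lt_apply_of_lt_opNorm hr
  rcases le_total 0 (L v) with h | h
  · exact ⟨v, hv.le, by rwa [Real.norm_of_nonneg h] at hrv⟩
  · exact ⟨-v, (norm_neg v).trans_le hv.le, by rwa [map_neg, ← Real.norm_of_nonpos h]⟩

theorem DifferentiableAt.eventually_add_mul_lt_comp_add_smul {φ : E → ℝ} {y v : E} {t r : ℝ}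
    (hφ : DifferentiableAt ℝ φ y) (hr : r < fderiv ℝ φ y v) :
    ∀ᶠ z in 𝓝[>] t, φ y + r * (z - t) < φ (y + (z - t) • v) := by
  have hline : HasDerivAt (fun z : ℝ => y + (z - t) • v) v t := by
    simpa using (((hasDerivAt_id t).sub_const t).smul_const v).const_add y
  have hφ' : HasFDerivAt φ (fderiv ℝ φ y) (y + (t - t) • v) := by
    simpa using hφ.hasFDerivAt
  have hslope := hasDerivAt_iff_tendsto_slope.1 (hφ'.comp_hasDerivAt t hline)
  filter_upwards [(hslope.mono_left (nhdsGT_le_nhdsNE t)).eventually (lt_mem_nhds hr),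
    self_mem_nhdsWithin] with z hz hzt
  rw [slope_def_field, lt_div_iff₀ (sub_pos.2 hzt)] at hz
  simp only [Function.comp_apply, sub_self, zero_smul, add_zero] at hz
  linarith

theorem monotoneOn_sSup_image_closedBall {X : Type*} [PseudoMetricSpace X] [ProperSpace X]
    {φ : X → ℝ} {x₀ : X} {R : ℝ} (hφ : ContinuousOn φ (closedBall x₀ R)) :
    MonotoneOn (fun t => sSup (φ '' closedBall x₀ t)) (Icc 0 R) := fun _ hs t ht hst =>
  csSup_le_csSup ((isCompact_closedBall x₀ t).bddAbove_image
      (hφ.mono (closedBall_subset_closedBall ht.2)))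
    ((nonempty_closedBall.2 hs.1).image φ) (image_mono (closedBall_subset_closedBall hst))

theorem frequently_lt_slope_sSup_image_closedBall [ProperSpace E] {φ : E → ℝ} {x₀ : E}
    {R c : ℝ} (hφ : ∀ x ∈ closedBall x₀ R, DifferentiableAt ℝ φ x)
    (hc : ∀ x ∈ closedBall x₀ R, c ≤ ‖fderiv ℝ φ x‖) {t : ℝ} (ht : t ∈ Ico 0 R) {r : ℝ}
    (hr : r < c) :
    ∃ᶠ z in 𝓝[>] t, r < slope (fun s => sSup (φ '' closedBall x₀ s)) t z := by
  have hcont : ContinuousOn φ (closedBall x₀ R) := fun x hx =>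
    (hφ x hx).continuousAt.continuousWithinAt
  obtain ⟨y, hy, hymax⟩ := (isCompact_closedBall x₀ t).exists_isMaxOn
    (nonempty_closedBall.2 ht.1) (hcont.mono (closedBall_subset_closedBall ht.2.le))
  have hyR : y ∈ closedBall x₀ R := closedBall_subset_closedBall ht.2.le hy
  obtain ⟨v, hv, hrv⟩ := (fderiv ℝ φ y).exists_norm_le_one_lt_apply ((hr.trans_le (hc y hyR)))
  refine Eventually.frequently ?_
  filter_upwards [(hφ y hyR).eventually_add_mul_lt_comp_add_smul (t := t) hrv,
    Ioo_mem_nhdsGT ht.2] with z hz ⟨hzt, hzR⟩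
  have hmem : y + (z - t) • v ∈ closedBall x₀ z := by
    rw [mem_closedBall]
    calc dist (y + (z - t) • v) x₀ ≤ dist (y + (z - t) • v) y + dist y x₀ := dist_triangle _ _ _
      _ ≤ (z - t) * 1 + t := by
        rw [dist_self_add_left, norm_smul, Real.norm_of_nonneg (sub_pos.2 hzt).le]
        gcongr
        exact mem_closedBall.1 hy
      _ = z := by ring
  have hle : φ (y + (z - t) • v) ≤ sSup (φ '' closedBall x₀ z) :=
    le_csSup ((isCompact_closedBall x₀ z).bddAbove_image
      (hcont.mono (closedBall_subset_closedBall hzR.le))) (mem_image_of_mem φ hmem)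
  have hmax : sSup (φ '' closedBall x₀ t) = φ y :=
    IsGreatest.csSup_eq ⟨mem_image_of_mem φ hy, forall_mem_image.2 hymax⟩
  rw [slope_def_field, lt_div_iff₀ (sub_pos.2 hzt), hmax]
  linarith

theorem add_mul_le_of_isMaxOn_closedBall [ProperSpace E] {φ : E → ℝ} {x₀ xp : E} {R c : ℝ}
    (hR : 0 ≤ R) (hφ : ∀ x ∈ closedBall x₀ R, DifferentiableAt ℝ φ x)
    (hc : ∀ x ∈ closedBall x₀ R, c ≤ ‖fderiv ℝ φ x‖) (hmax : IsMaxOn φ (closedBall x₀ R) xp) :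
    φ x₀ + c * R ≤ φ xp := by
  have hcont : ContinuousOn φ (closedBall x₀ R) := fun x hx =>
    (hφ x hx).continuousAt.continuousWithinAt
  have hgrowth :=
    (monotoneOn_sSup_image_closedBall hcont).add_mul_le_of_forall_lt_frequently_lt_slope hR
      fun t ht r hr => frequently_lt_slope_sSup_image_closedBall hφ hc ht hr
  have hR' : sSup (φ '' closedBall x₀ R) ≤ φ xp :=
    csSup_le ((nonempty_closedBall.2 hR).image φ) (forall_mem_image.2 hmax)
  simp only [closedBall_zero, image_singleton, csSup_singleton, sub_zero] at hgrowth
  linarith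

end

theorem midpoint_eq_of_mem_closedBall_of_dist_eq_two_mul {V P : Type*} [NormedAddCommGroup V]
    [NormedSpace ℝ V] [StrictConvexSpace ℝ V] [MetricSpace P] [NormedAddTorsor V P]
    {x y c : P} {R : ℝ} (hx : x ∈ closedBall c R) (hy : y ∈ closedBall c R)
    (hxy : dist x y = 2 * R) : midpoint ℝ x y = c := by
  rw [mem_closedBall] at hx hy
  have htri := dist_triangle x c y
  rw [dist_comm] at hy
  refine (eq_midpoint_of_dist_eq_half (x := x) (y := c) (z := y) ?_ ?_).symm <;>
    linarith

theorem eikonal_extrema_antipodal_general {N : ℕ} {Ω : Set (EuclideanSpace ℝ (Fin N))}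
    (φ : EuclideanSpace ℝ (Fin N) → ℝ)
    (hdiff : ∀ x ∈ Ω, DifferentiableAt ℝ φ x)
    (heik : ∀ x ∈ Ω, ‖gradient φ x‖ = 1)
    (x₀ : EuclideanSpace ℝ (Fin N)) (R : ℝ) (hR : 0 < R)
    (hball : closedBall x₀ R ⊆ Ω)
    (xp xm : EuclideanSpace ℝ (Fin N))
    (hxp : xp ∈ closedBall x₀ R) (hxm : xm ∈ closedBall x₀ R)
    (hmax : IsMaxOn φ (closedBall x₀ R) xp)
    (hmin : IsMinOn φ (closedBall x₀ R) xm) :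
    ‖xp - xm‖ = 2 * R ∧ xp + xm = x₀ + x₀ := by
  have hφ : ∀ x ∈ closedBall x₀ R, DifferentiableAt ℝ φ x := fun x hx => hdiff x (hball hx)
  have hDφ : ∀ x ∈ closedBall x₀ R, ‖fderiv ℝ φ x‖ = 1 := fun x hx => by
    rw [← heik x (hball hx), ← toDual_gradient, LinearIsometryEquiv.norm_map]
  have hup : φ x₀ + 1 * R ≤ φ xp :=
    add_mul_le_of_isMaxOn_closedBall hR.le hφ (fun x hx => (hDφ x hx).ge) hmax
  have hdown : -φ x₀ + 1 * R ≤ -φ xm :=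
    add_mul_le_of_isMaxOn_closedBall (φ := fun x => -φ x) hR.le (fun x hx => (hφ x hx).neg)
      (fun x hx => by rw [fderiv_fun_neg, norm_neg, hDφ x hx]) hmin.neg
  have hlip : ‖φ xp - φ xm‖ ≤ 1 * ‖xp - xm‖ :=
    (convex_closedBall x₀ R).norm_image_sub_le_of_norm_fderiv_le hφ
      (fun x hx => (hDφ x hx).le) hxm hxp
  have hdist : dist xp xm = 2 * R := by
    refine le_antisymm ((dist_triangle_right xp xm x₀).trans ?_) ?_
    · linarith [mem_closedBall.1 hxp, mem_closedBall.1 hxm]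
    · linarith [le_abs_self (φ xp - φ xm), dist_eq_norm xp xm, Real.norm_eq_abs (φ xp - φ xm)]
  have hmid := midpoint_eq_of_mem_closedBall_of_dist_eq_two_mul hxp hxm hdist
  rw [midpoint_eq_iff, AffineEquiv.pointReflection_apply, vsub_eq_sub, vadd_eq_add] at hmid
  exact ⟨dist_eq_norm xp xm ▸ hdist, by rw [← hmid]; abel⟩

theorem eikonal_extrema_antipodal {N : ℕ} {Ω : Set (EuclideanSpace ℝ (Fin N))}
    (hΩ : IsOpen Ω) (φ : EuclideanSpace ℝ (Fin N) → ℝ)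
    (hdiff : ∀ x ∈ Ω, DifferentiableAt ℝ φ x)
    (heik : ∀ x ∈ Ω, ‖gradient φ x‖ = 1)
    (x₀ : EuclideanSpace ℝ (Fin N)) (hx₀ : x₀ ∈ Ω) (R : ℝ) (hR : 0 < R)
    (hball : closedBall x₀ R ⊆ Ω)
    (xp xm : EuclideanSpace ℝ (Fin N))
    (hxp : xp ∈ closedBall x₀ R) (hxm : xm ∈ closedBall x₀ R)
    (hmax : IsMaxOn φ (closedBall x₀ R) xp)
    (hmin : IsMinOn φ (closedBall x₀ R) xm) :
    ‖xp - xm‖ = 2 * R ∧ xp + xm = x₀ + x₀ :=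
  eikonal_extrema_antipodal_general φ hdiff heik x₀ R hR hball xp xm hxp hxm hmax hmin
end

section
/- Let Ω ⊆ ℝ^N be open, φ : Ω → ℝ everywhere differentiable with |∇φ| = 1 in Ω, x₀ ∈ Ω and R > 0 with B̄(x₀, R) ⊆ Ω. Then the maximum of φ over B̄(x₀, R) is attained at a unique point, namely x₀ + R∇φ(x₀), and the minimum is attained at the unique point x₀ − R∇φ(x₀). -/
/-!
A differentiable function with `‖∇φ‖ = 1` on a convex set is 1-Lipschitz there, so
`φ ≤ φ x₀ + R` on the ball. Conversely, for `0 ≤ c < 1` the function `φ - c · dist · x₀`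
strictly increases in the direction `∇φ z` at every interior point `z`, so its maximum over the
ball lies on the sphere; hence `max φ ≥ φ x₀ + c R` for all `c < 1`. A maximiser `y` therefore
satisfies `φ y = φ x₀ + ‖y - x₀‖`, which makes `φ` affine with slope one along `[x₀, y]`. Then
`⟪∇φ x₀, y - x₀⟫ = ‖y - x₀‖` is the equality case of Cauchy–Schwarz, so `y = x₀ + R ∇φ x₀`.
Minima are maxima of `-φ`.
-/

open Metric Set Filter Topology
open scoped RealInnerProductSpace

section Eikonal

variable {E : Type*} [NormedAddCommGroup E] [InnerProductSpace ℝ E] [CompleteSpace E]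
  {φ : E → ℝ}

theorem norm_gradient_eq_norm_fderiv (φ : E → ℝ) (x : E) :
    ‖gradient φ x‖ = ‖fderiv ℝ φ x‖ := by
  rw [← toDual_gradient, LinearIsometryEquiv.norm_map]

theorem gradient_fun_neg (φ : E → ℝ) (x : E) :
    gradient (fun y => -φ y) x = -gradient φ x := by
  rw [gradient, gradient, fderiv_fun_neg, map_neg]

theorem DifferentiableAt.hasDerivAt_add_smul {x : E} (hφ : DifferentiableAt ℝ φ x) (v : E) :
    HasDerivAt (fun t : ℝ => φ (x + t • v)) ⟪gradient φ x, v⟫ 0 := by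
  have hline : HasDerivAt (fun t : ℝ => x + t • v) v 0 := by
    simpa using ((hasDerivAt_id (0 : ℝ)).smul_const v).const_add x
  rw [inner_gradient_left]
  exact (by simpa using hφ.hasFDerivAt : HasFDerivAt φ (fderiv ℝ φ x) (x + (0 : ℝ) • v))
    |>.comp_hasDerivAt 0 hline

theorem DifferentiableAt.eventually_add_mul_lt {x v : E} {c : ℝ} (hφ : DifferentiableAt ℝ φ x)
    (hc : c < ⟪gradient φ x, v⟫) :
    ∀ᶠ t in 𝓝[>] (0 : ℝ), φ x + c * t < φ (x + t • v) := by
  filter_upwards [(hφ.hasDerivAt_add_smul v).tendsto_slope_zero_right.eventually_const_lt hc,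
    self_mem_nhdsWithin] with t hslope (ht : 0 < t)
  simp only [zero_add, zero_smul, add_zero, smul_eq_mul] at hslope
  rw [lt_inv_mul_iff₀ ht] at hslope
  linarith

theorem Convex.le_add_norm_sub_of_norm_gradient_le_one {s : Set E} (hs : Convex ℝ s)
    (hdiff : ∀ x ∈ s, DifferentiableAt ℝ φ x) (hgrad : ∀ x ∈ s, ‖gradient φ x‖ ≤ 1)
    {x y : E} (hx : x ∈ s) (hy : y ∈ s) : φ y ≤ φ x + ‖y - x‖ := by
  have h := hs.norm_image_sub_le_of_norm_fderiv_le hdiff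
    (fun z hz => (norm_gradient_eq_norm_fderiv φ z).symm.trans_le (hgrad z hz)) hx hy
  rw [one_mul, Real.norm_eq_abs, abs_le] at h
  linarith [h.2]


theorem Convex.apply_add_smul_sub_eq {s : Set E} (hs : Convex ℝ s)
    (hdiff : ∀ x ∈ s, DifferentiableAt ℝ φ x) (hgrad : ∀ x ∈ s, ‖gradient φ x‖ ≤ 1)
    {x y : E} (hx : x ∈ s) (hy : y ∈ s) (hxy : φ x + ‖y - x‖ ≤ φ y) {t : ℝ} (ht : t ∈ Icc 0 1) :
    φ (x + t • (y - x)) = φ x + t * ‖y - x‖ := by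
  have hp := hs.add_smul_sub_mem hx hy ht
  have hpx : ‖x + t • (y - x) - x‖ = t * ‖y - x‖ := by
    rw [add_sub_cancel_left, norm_smul, Real.norm_of_nonneg ht.1]
  have hyp : ‖y - (x + t • (y - x))‖ = (1 - t) * ‖y - x‖ := by
    rw [show y - (x + t • (y - x)) = (1 - t) • (y - x) by module, norm_smul,
      Real.norm_of_nonneg (sub_nonneg.2 ht.2)]
  have hupper := hs.le_add_norm_sub_of_norm_gradient_le_one hdiff hgrad hx hp
  have hlower := hs.le_add_norm_sub_of_norm_gradient_le_one hdiff hgrad hp hy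
  rw [hpx] at hupper
  rw [hyp] at hlower
  linarith

theorem DifferentiableAt.norm_smul_gradient_eq {x v : E} (hφ : DifferentiableAt ℝ φ x)
    (hgrad : ‖gradient φ x‖ = 1)
    (hline : ∀ t ∈ Icc (0 : ℝ) 1, φ (x + t • v) = φ x + t * ‖v‖) :
    ‖v‖ • gradient φ x = v := by
  have haffine : HasDerivWithinAt (fun t : ℝ => φ (x + t • v)) ‖v‖ (Icc 0 1) 0 := by
    simpa using (((hasDerivAt_id 0).mul_const ‖v‖).const_add (φ x)).hasDerivWithinAt.congr
      (fun t ht => hline t ht) (by simp)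
  have hinner : ⟪gradient φ x, v⟫ = ‖gradient φ x‖ * ‖v‖ := by
    rw [hgrad, one_mul]
    exact uniqueDiffOn_Icc_zero_one 0 ⟨le_rfl, zero_le_one⟩ |>.eq_deriv _
      (hφ.hasDerivAt_add_smul v).hasDerivWithinAt haffine
  rw [inner_eq_norm_mul_iff_real.1 hinner, hgrad, one_smul]


theorem exists_mem_ball_sub_mul_dist_lt {x₀ z : E} {R c : ℝ} (hc₀ : 0 ≤ c) (hc₁ : c < 1)
    (hz : z ∈ ball x₀ R) (hφ : DifferentiableAt ℝ φ z) (hgrad : ‖gradient φ z‖ = 1) :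
    ∃ w ∈ ball x₀ R, φ z - c * dist z x₀ < φ w - c * dist w x₀ := by
  set g := gradient φ z
  have hc : c < ⟪g, g⟫ := by rwa [real_inner_self_eq_norm_sq, hgrad, one_pow]
  have hstay : ∀ᶠ t in 𝓝[>] (0 : ℝ), z + t • g ∈ ball x₀ R :=
    nhdsWithin_le_nhds <| ((continuous_const.add (continuous_id.smul continuous_const)).tendsto'
      0 z (by simp)).eventually (isOpen_ball.mem_nhds hz)
  obtain ⟨t, hascent, hmem, ht⟩ :=
    ((hφ.eventually_add_mul_lt hc).and (hstay.and self_mem_nhdsWithin)).exists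
  refine ⟨z + t • g, hmem, ?_⟩
  have hdist : dist (z + t • g) x₀ ≤ t + dist z x₀ :=
    calc dist (z + t • g) x₀ ≤ dist (z + t • g) z + dist z x₀ := dist_triangle _ _ _
      _ = t + dist z x₀ := by
        rw [dist_self_add_left, norm_smul, hgrad, mul_one, Real.norm_of_nonneg (le_of_lt ht)]
  nlinarith [mul_le_mul_of_nonneg_left hdist hc₀]

theorem exists_mem_closedBall_add_mul_le [ProperSpace E] {x₀ : E} {R c : ℝ} (hR : 0 ≤ R)
    (hc₀ : 0 ≤ c) (hc₁ : c < 1) (hdiff : ∀ x ∈ closedBall x₀ R, DifferentiableAt ℝ φ x)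
    (hgrad : ∀ x ∈ closedBall x₀ R, ‖gradient φ x‖ = 1) :
    ∃ z ∈ closedBall x₀ R, φ x₀ + c * R ≤ φ z := by
  have hcont : ContinuousOn (fun x => φ x - c * dist x x₀) (closedBall x₀ R) :=
    ContinuousOn.sub (fun x hx => (hdiff x hx).continuousAt.continuousWithinAt)
      (continuous_const.mul (continuous_id.dist continuous_const)).continuousOn
  obtain ⟨z, hz, hmax⟩ :=
    (isCompact_closedBall x₀ R).exists_isMaxOn (nonempty_closedBall.2 hR) hcont
  have hzR : dist z x₀ = R := by
    refine (mem_closedBall.1 hz).antisymm (not_lt.1 fun hlt => ?_)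
    obtain ⟨w, hw, hlt'⟩ := exists_mem_ball_sub_mul_dist_lt hc₀ hc₁ hlt (hdiff z hz) (hgrad z hz)
    exact (hmax (ball_subset_closedBall hw)).not_gt hlt'
  have hx₀ : φ x₀ - c * dist x₀ x₀ ≤ φ z - c * dist z x₀ := hmax (mem_closedBall_self hR)
  rw [dist_self, hzR] at hx₀
  exact ⟨z, hz, by linarith⟩

theorem add_le_of_isMaxOn_closedBall [ProperSpace E] {x₀ y : E} {R : ℝ}
    (hdiff : ∀ x ∈ closedBall x₀ R, DifferentiableAt ℝ φ x)
    (hgrad : ∀ x ∈ closedBall x₀ R, ‖gradient φ x‖ = 1) (hy : y ∈ closedBall x₀ R)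
    (hmax : IsMaxOn φ (closedBall x₀ R) y) : φ x₀ + R ≤ φ y := by
  have hR : 0 ≤ R := nonempty_closedBall.1 ⟨y, hy⟩
  have hlim : Tendsto (fun c => φ x₀ + c * R) (𝓝[<] 1) (𝓝 (φ x₀ + R)) :=
    ((continuous_const.add (continuous_id.mul continuous_const)).tendsto' 1 _
      (by simp)).mono_left nhdsWithin_le_nhds
  refine le_of_tendsto hlim ?_
  filter_upwards [Ico_mem_nhdsLT zero_lt_one] with c hc
  obtain ⟨z, hz, hle⟩ := exists_mem_closedBall_add_mul_le hR hc.1 hc.2 hdiff hgrad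
  exact hle.trans (hmax hz)

theorem eq_add_smul_gradient_of_isMaxOn_closedBall [ProperSpace E] {x₀ y : E} {R : ℝ}
    (hdiff : ∀ x ∈ closedBall x₀ R, DifferentiableAt ℝ φ x)
    (hgrad : ∀ x ∈ closedBall x₀ R, ‖gradient φ x‖ = 1) (hy : y ∈ closedBall x₀ R)
    (hmax : IsMaxOn φ (closedBall x₀ R) y) : y = x₀ + R • gradient φ x₀ := by
  have hx₀ : x₀ ∈ closedBall x₀ R := mem_closedBall_self (nonempty_closedBall.1 ⟨y, hy⟩)
  have hgrad_le : ∀ x ∈ closedBall x₀ R, ‖gradient φ x‖ ≤ 1 := fun x hx => (hgrad x hx).le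
  have hle := add_le_of_isMaxOn_closedBall hdiff hgrad hy hmax
  have hdist : ‖y - x₀‖ = R := (mem_closedBall_iff_norm.1 hy).antisymm <| by
    linarith [(convex_closedBall x₀ R).le_add_norm_sub_of_norm_gradient_le_one hdiff hgrad_le hx₀ hy]
  have hsegment := fun t (ht : t ∈ Icc (0 : ℝ) 1) =>
    (convex_closedBall x₀ R).apply_add_smul_sub_eq hdiff hgrad_le hx₀ hy (hdist ▸ hle) ht
  have hdir := (hdiff x₀ hx₀).norm_smul_gradient_eq (hgrad x₀ hx₀) hsegment
  rw [hdist] at hdir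
  rw [hdir, add_sub_cancel]


theorem isMaxOn_closedBall_add_smul_gradient_and_unique [ProperSpace E] {x₀ : E} {R : ℝ}
    (hdiff : ∀ x ∈ closedBall x₀ R, DifferentiableAt ℝ φ x)
    (hgrad : ∀ x ∈ closedBall x₀ R, ‖gradient φ x‖ = 1) :
    IsMaxOn φ (closedBall x₀ R) (x₀ + R • gradient φ x₀) ∧
      ∀ y ∈ closedBall x₀ R, IsMaxOn φ (closedBall x₀ R) y → y = x₀ + R • gradient φ x₀ := by
  have hunique : ∀ y ∈ closedBall x₀ R, IsMaxOn φ (closedBall x₀ R) y →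
      y = x₀ + R • gradient φ x₀ := fun y hy hmax =>
    eq_add_smul_gradient_of_isMaxOn_closedBall hdiff hgrad hy hmax
  rcases (closedBall x₀ R).eq_empty_or_nonempty with hempty | hne
  · exact ⟨by simp [hempty, IsMaxOn, IsMaxFilter], hunique⟩
  obtain ⟨m, hm, hmax⟩ := (isCompact_closedBall x₀ R).exists_isMaxOn hne
    fun x hx => (hdiff x hx).continuousAt.continuousWithinAt
  exact ⟨hunique m hm hmax ▸ hmax, hunique⟩

theorem isMinOn_closedBall_sub_smul_gradient_and_unique [ProperSpace E] {x₀ : E} {R : ℝ}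
    (hdiff : ∀ x ∈ closedBall x₀ R, DifferentiableAt ℝ φ x)
    (hgrad : ∀ x ∈ closedBall x₀ R, ‖gradient φ x‖ = 1) :
    IsMinOn φ (closedBall x₀ R) (x₀ - R • gradient φ x₀) ∧
      ∀ y ∈ closedBall x₀ R, IsMinOn φ (closedBall x₀ R) y → y = x₀ - R • gradient φ x₀ := by
  have hneg := isMaxOn_closedBall_add_smul_gradient_and_unique (φ := fun x => -φ x)
    (fun x hx => (hdiff x hx).neg) (fun x hx => by rw [gradient_fun_neg, norm_neg, hgrad x hx])
  simp only [gradient_fun_neg, smul_neg, ← sub_eq_add_neg] at hneg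
  exact ⟨by simpa using hneg.1.neg, fun y hy hmin => hneg.2 y hy hmin.neg⟩

end Eikonal

theorem eikonal_unique_extrema_general {N : ℕ} {Ω : Set (EuclideanSpace ℝ (Fin N))}
    (φ : EuclideanSpace ℝ (Fin N) → ℝ)
    (hdiff : ∀ x ∈ Ω, DifferentiableAt ℝ φ x)
    (heik : ∀ x ∈ Ω, ‖gradient φ x‖ = 1)
    (x₀ : EuclideanSpace ℝ (Fin N)) (R : ℝ)
    (hball : closedBall x₀ R ⊆ Ω) :
    (IsMaxOn φ (closedBall x₀ R) (x₀ + R • gradient φ x₀) ∧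
      ∀ y ∈ closedBall x₀ R, IsMaxOn φ (closedBall x₀ R) y →
        y = x₀ + R • gradient φ x₀) ∧
    (IsMinOn φ (closedBall x₀ R) (x₀ - R • gradient φ x₀) ∧
      ∀ y ∈ closedBall x₀ R, IsMinOn φ (closedBall x₀ R) y →
        y = x₀ - R • gradient φ x₀) :=
  ⟨isMaxOn_closedBall_add_smul_gradient_and_unique (fun x hx => hdiff x (hball hx))
      (fun x hx => heik x (hball hx)),
    isMinOn_closedBall_sub_smul_gradient_and_unique (fun x hx => hdiff x (hball hx))
      (fun x hx => heik x (hball hx))⟩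

theorem eikonal_unique_extrema {N : ℕ} {Ω : Set (EuclideanSpace ℝ (Fin N))}
    (hΩ : IsOpen Ω) (φ : EuclideanSpace ℝ (Fin N) → ℝ)
    (hdiff : ∀ x ∈ Ω, DifferentiableAt ℝ φ x)
    (heik : ∀ x ∈ Ω, ‖gradient φ x‖ = 1)
    (x₀ : EuclideanSpace ℝ (Fin N)) (hx₀ : x₀ ∈ Ω) (R : ℝ) (hR : 0 < R)
    (hball : closedBall x₀ R ⊆ Ω) :
    (IsMaxOn φ (closedBall x₀ R) (x₀ + R • gradient φ x₀) ∧
      ∀ y ∈ closedBall x₀ R, IsMaxOn φ (closedBall x₀ R) y →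
        y = x₀ + R • gradient φ x₀) ∧
    (IsMinOn φ (closedBall x₀ R) (x₀ - R • gradient φ x₀) ∧
      ∀ y ∈ closedBall x₀ R, IsMinOn φ (closedBall x₀ R) y →
        y = x₀ - R • gradient φ x₀) :=
  eikonal_unique_extrema_general φ hdiff heik x₀ R hball
end

section
/- Let d > 0 and 0 ≤ ℓ < d/10. Let w, y, z ∈ ℝ^N with |y − w|² = d² + ℓ², |y − z| = d, and |z − w| ≥ 2d. Then the angle α at y in the triangle wyz between the vectors y − w and z − y satisfies 1 − cos α ≤ ℓ²/(2d√(d² + ℓ²)) · 2, and in particular sin α ≤ C·ℓ/d for a universal constant C. -/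
/-!
By the law of cosines, `‖u + v‖ ≥ 2d` forces `⟪u, v⟫ ≥ d² - ℓ²/2`, while
`‖u‖ ‖v‖ = d √(d² + ℓ²) ≤ d² + ℓ²/2`; so `1 - cos α = (‖u‖ ‖v‖ - ⟪u, v⟫) / (‖u‖ ‖v‖)` is at most
`ℓ² / (d √(d² + ℓ²)) ≤ ℓ² / d²`, and `sin² α ≤ 2 (1 - cos α)` gives `sin α ≤ 2ℓ / d`.
-/

open InnerProductGeometry Real

theorem Real.sin_sq_le_two_mul_one_sub_cos (x : ℝ) : sin x ^ 2 ≤ 2 * (1 - cos x) := by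
  nlinarith [sin_sq_add_cos_sq x, cos_le_one x, neg_one_le_cos x]

theorem Real.mul_sqrt_sq_add_sq_le (d ℓ : ℝ) : d * √(d ^ 2 + ℓ ^ 2) ≤ d ^ 2 + ℓ ^ 2 / 2 := by
  have hs := sq_sqrt (add_nonneg (sq_nonneg d) (sq_nonneg ℓ))
  nlinarith [sq_nonneg (√(d ^ 2 + ℓ ^ 2) - d)]

section

variable {V : Type*} [NormedAddCommGroup V] [InnerProductSpace ℝ V] {u v : V} {d ℓ : ℝ}

theorem inner_ge_of_two_mul_le_norm_add (hu : ‖u‖ ^ 2 = d ^ 2 + ℓ ^ 2) (hv : ‖v‖ = d)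
    (huv : 2 * d ≤ ‖u + v‖) : d ^ 2 - ℓ ^ 2 / 2 ≤ inner ℝ u v := by
  have hd : 0 ≤ d := hv ▸ norm_nonneg v
  have hsq : (2 * d) ^ 2 ≤ ‖u + v‖ ^ 2 := pow_le_pow_left₀ (by positivity) huv 2
  nlinarith [norm_add_sq_real u v]

theorem one_sub_cos_angle_le (hd : 0 < d) (hu : ‖u‖ ^ 2 = d ^ 2 + ℓ ^ 2) (hv : ‖v‖ = d)
    (huv : 2 * d ≤ ‖u + v‖) : 1 - cos (angle u v) ≤ ℓ ^ 2 / (d * √(d ^ 2 + ℓ ^ 2)) := by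
  have hnorm_u : ‖u‖ = √(d ^ 2 + ℓ ^ 2) := by rw [← hu, sqrt_sq (norm_nonneg u)]
  have hpos : 0 < d * √(d ^ 2 + ℓ ^ 2) := by positivity
  have hinner := inner_ge_of_two_mul_le_norm_add hu hv huv
  rw [cos_angle, hnorm_u, hv, mul_comm, one_sub_div hpos.ne', div_le_div_iff_of_pos_right hpos]
  linarith [mul_sqrt_sq_add_sq_le d ℓ]

theorem sin_angle_le (hd : 0 < d) (hℓ : 0 ≤ ℓ) (hu : ‖u‖ ^ 2 = d ^ 2 + ℓ ^ 2) (hv : ‖v‖ = d)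
    (huv : 2 * d ≤ ‖u + v‖) : sin (angle u v) ≤ 2 * ℓ / d := by
  have hcos := one_sub_cos_angle_le hd hu hv huv
  have hds : d * d ≤ d * √(d ^ 2 + ℓ ^ 2) :=
    mul_le_mul_of_nonneg_left (le_sqrt_of_sq_le (by nlinarith)) hd.le
  have hsq : sin (angle u v) ^ 2 ≤ (2 * ℓ / d) ^ 2 :=
    calc sin (angle u v) ^ 2 ≤ 2 * (1 - cos (angle u v)) := sin_sq_le_two_mul_one_sub_cos _
      _ ≤ 2 * (ℓ ^ 2 / (d * √(d ^ 2 + ℓ ^ 2))) := by gcongr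
      _ ≤ 2 * (ℓ ^ 2 / (d * d)) := by gcongr
      _ ≤ (2 * ℓ / d) ^ 2 := by rw [div_pow]; field_simp; nlinarith
  exact (abs_le_of_sq_le_sq' hsq (by positivity)).2

end

theorem triangle_angle_estimate :
    ∃ C : ℝ, 0 < C ∧ ∀ (N : ℕ) (d ℓ : ℝ), 0 < d → 0 ≤ ℓ → ℓ < d / 10 →
      ∀ w y z : EuclideanSpace ℝ (Fin N),
        ‖y - w‖ ^ 2 = d ^ 2 + ℓ ^ 2 → ‖y - z‖ = d → 2 * d ≤ ‖z - w‖ →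
        (1 - Real.cos (InnerProductGeometry.angle (y - w) (z - y)) ≤
            ℓ ^ 2 / (2 * d * Real.sqrt (d ^ 2 + ℓ ^ 2)) * 2) ∧
        Real.sin (InnerProductGeometry.angle (y - w) (z - y)) ≤ C * ℓ / d := by
  refine ⟨2, two_pos, fun N d ℓ hd hℓ _ w y z hyw hyz hzw => ?_⟩
  have hv : ‖z - y‖ = d := by rw [norm_sub_rev, hyz]
  have huv : 2 * d ≤ ‖(y - w) + (z - y)‖ := by rwa [sub_add_sub_cancel']
  constructor
  · calc 1 - cos (angle (y - w) (z - y)) ≤ ℓ ^ 2 / (d * √(d ^ 2 + ℓ ^ 2)) :=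
          one_sub_cos_angle_le hd hyw hv huv
      _ = ℓ ^ 2 / (2 * d * √(d ^ 2 + ℓ ^ 2)) * 2 := by ring
  · exact sin_angle_le hd hℓ hyw hv huv
end

section
/- Let x_r be a point of a closed ball B̄(x₀, r) at which a differentiable 1-Lipschitz function φ with |∇φ(x_r)| = 1 attains its maximum over B̄(x₀, r), and let M(s) denote the max of φ over B̄(x₀, s) for s near r. Then the lower right derivative of M at r is at least 1: liminf_{h→0⁺} (M(r+h) − M(r))/h ≥ 1. -/
/-! Moving from `x_r` by `h` along the unit gradient stays inside the ball of radius `r + h`, so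
`M (r + h) - M r ≥ φ (x_r + h ∇φ(x_r)) - φ (x_r) = h + o(h)`. Conversely every point of the larger
ball lies within `h` of the smaller one, so the 1-Lipschitz bound gives `M (r + h) ≤ M r + h`.
The right difference quotients of `M` at `r` are thus squeezed to `1`. -/

open Metric Set Filter Topology InnerProductSpace

theorem IsMaxOn.sSup_image_eq {α β : Type*} [ConditionallyCompleteLattice β] {f : α → β}
    {s : Set α} {y : α} (hmax : IsMaxOn f s y) (hy : y ∈ s) : sSup (f '' s) = f y :=
  IsGreatest.csSup_eq ⟨mem_image_of_mem f hy, forall_mem_image.2 fun _ hx => hmax hx⟩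

section Lipschitz

variable {E : Type*} [NormedAddCommGroup E] [NormedSpace ℝ E] {f : E → ℝ} {c x y : E}
  {r h : ℝ}

theorem IsMaxOn.le_add_of_mem_closedBall_add (hf : LipschitzOnWith 1 f (closedBall c (r + h)))
    (hmax : IsMaxOn f (closedBall c r) y) (hr : 0 ≤ r) (hh : 0 ≤ h)
    (hx : x ∈ closedBall c (r + h)) : f x ≤ f y + h := by
  obtain ⟨z, hxz, hzc⟩ := exists_dist_le_le hh hr (mem_closedBall.1 hx)
  have hz : z ∈ closedBall c r := mem_closedBall.2 hzc
  have hz' : z ∈ closedBall c (r + h) := closedBall_subset_closedBall (by linarith) hz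
  have hlip : |f x - f z| ≤ dist x z := by
    simpa [Real.dist_eq] using hf.dist_le_mul x hx z hz'
  have hzy : f z ≤ f y := hmax hz
  linarith [(abs_le.1 hlip).2]

end Lipschitz

variable {E : Type*} [NormedAddCommGroup E] [InnerProductSpace ℝ E] [CompleteSpace E]
  {f : E → ℝ} {g x : E}

theorem HasGradientAt.tendsto_slope_along_gradient (hf : HasGradientAt f g x) :
    Tendsto (fun t : ℝ => (f (x + t • g) - f x) / t) (𝓝[>] 0) (𝓝 (‖g‖ ^ 2)) := by
  have hline := hf.hasFDerivAt.hasLineDerivAt g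
  rw [toDual_apply_apply, real_inner_self_eq_norm_sq] at hline
  simpa [div_eq_inv_mul] using hline.tendsto_slope_zero_right

theorem tendsto_slope_sSup_image_closedBall {c y : E} {r h₀ : ℝ} (hh₀ : 0 < h₀)
    (hf : LipschitzOnWith 1 f (closedBall c (r + h₀))) (hy : y ∈ closedBall c r)
    (hmax : IsMaxOn f (closedBall c r) y) (hgrad : HasGradientAt f g y) (hg : ‖g‖ = 1) :
    Tendsto (fun h => (sSup (f '' closedBall c (r + h)) - sSup (f '' closedBall c r)) / h)
      (𝓝[>] 0) (𝓝 1) := by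
  have hr : 0 ≤ r := dist_nonneg.trans (mem_closedBall.1 hy)
  have hslope := hgrad.tendsto_slope_along_gradient
  rw [hg, one_pow] at hslope
  have hbounds : ∀ h ∈ Ioc 0 h₀, f (y + h • g) ≤ sSup (f '' closedBall c (r + h)) ∧
      sSup (f '' closedBall c (r + h)) ≤ f y + h := by
    rintro h ⟨hpos, hle⟩
    have hf' : LipschitzOnWith 1 f (closedBall c (r + h)) :=
      hf.mono (closedBall_subset_closedBall (by linarith))
    have hupper : ∀ x ∈ closedBall c (r + h), f x ≤ f y + h := fun x hx =>
      hmax.le_add_of_mem_closedBall_add hf' hr hpos.le hx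
    have hstep : y + h • g ∈ closedBall c (r + h) := by
      rw [mem_closedBall, add_comm r]
      calc dist (y + h • g) c ≤ dist (y + h • g) y + dist y c := dist_triangle _ _ _
        _ ≤ h + r := by
          rw [dist_self_add_left, norm_smul, hg, Real.norm_of_nonneg hpos.le, mul_one]
          linarith [mem_closedBall.1 hy]
    exact ⟨le_csSup ⟨f y + h, forall_mem_image.2 hupper⟩ (mem_image_of_mem f hstep),
      csSup_le ((nonempty_closedBall.2 (by linarith)).image f) (forall_mem_image.2 hupper)⟩
  rw [hmax.sSup_image_eq hy]
  refine tendsto_of_tendsto_of_tendsto_of_le_of_le' hslope tendsto_const_nhds ?_ ?_ <;>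
    filter_upwards [Ioc_mem_nhdsGT hh₀] with h hh
  · exact div_le_div_of_nonneg_right (by linarith [(hbounds h hh).1]) hh.1.le
  · rw [div_le_one hh.1]
    linarith [(hbounds h hh).2]

theorem max_function_lower_right_derivative_general {N : ℕ} {Ω : Set (EuclideanSpace ℝ (Fin N))}
    (φ : EuclideanSpace ℝ (Fin N) → ℝ)
    (hdiff : ∀ x ∈ Ω, DifferentiableAt ℝ φ x)
    (hlip : LipschitzOnWith 1 φ Ω)
    (x₀ : EuclideanSpace ℝ (Fin N)) (r h₀ : ℝ) (hh₀ : 0 < h₀)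
    (hball : closedBall x₀ (r + h₀) ⊆ Ω)
    (xr : EuclideanSpace ℝ (Fin N)) (hxr : xr ∈ closedBall x₀ r)
    (hmax : IsMaxOn φ (closedBall x₀ r) xr)
    (hgrad : ‖gradient φ xr‖ = 1)
    (M : ℝ → ℝ) (hM : ∀ s, M s = sSup (φ '' closedBall x₀ s)) :
    1 ≤ Filter.liminf (fun h => (M (r + h) - M r) / h) (nhdsWithin 0 (Ioi 0)) := by
  have hxrΩ : xr ∈ Ω := hball (closedBall_subset_closedBall (by linarith) hxr)
  obtain rfl : M = fun s => sSup (φ '' closedBall x₀ s) := funext hM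
  exact (tendsto_slope_sSup_image_closedBall hh₀ (hlip.mono hball) hxr hmax
    (hdiff xr hxrΩ).hasGradientAt hgrad).liminf_eq.ge

theorem max_function_lower_right_derivative {N : ℕ} {Ω : Set (EuclideanSpace ℝ (Fin N))}
    (hΩ : IsOpen Ω) (φ : EuclideanSpace ℝ (Fin N) → ℝ)
    (hdiff : ∀ x ∈ Ω, DifferentiableAt ℝ φ x)
    (hlip : LipschitzOnWith 1 φ Ω)
    (x₀ : EuclideanSpace ℝ (Fin N)) (r h₀ : ℝ) (hr : 0 ≤ r) (hh₀ : 0 < h₀)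
    (hball : closedBall x₀ (r + h₀) ⊆ Ω)
    (xr : EuclideanSpace ℝ (Fin N)) (hxr : xr ∈ closedBall x₀ r)
    (hmax : IsMaxOn φ (closedBall x₀ r) xr)
    (hgrad : ‖gradient φ xr‖ = 1)
    (M : ℝ → ℝ) (hM : ∀ s, M s = sSup (φ '' closedBall x₀ s)) :
    1 ≤ Filter.liminf (fun h => (M (r + h) - M r) / h) (nhdsWithin 0 (Ioi 0)) :=
  max_function_lower_right_derivative_general φ hdiff hlip x₀ r h₀ hh₀ hball xr hxr hmax hgrad M hM
end
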